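/- arXiv:2001.07397 — 2 statements merged into one kernel-verified Lean document; each statement's English description precedes it below -/
import Mathlib

section
/- Every well-filtered T0 space is open well-filtered. -/
open Set

def RelCpt {X : Type*} [TopologicalSpace X] (A B : Set X) : Prop :=
  A ⊆ B ∧ ∀ 𝒰 : Set (Set X), (∀ U ∈ 𝒰, IsOpen U) → B ⊆ ⋃₀ 𝒰 →
    ∃ 𝒱 ⊆ 𝒰, 𝒱.Finite ∧ A ⊆ ⋃₀ 𝒱

def Saturated {X : Type*} [TopologicalSpace X] (A : Set X) : Prop :=
  A = ⋂₀ {U : Set X | IsOpen U ∧ A ⊆ U}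

def WellFiltered (X : Type*) [TopologicalSpace X] : Prop :=
  ∀ 𝒦 : Set (Set X), 𝒦.Nonempty →
    (∀ K ∈ 𝒦, IsCompact K ∧ Saturated K) →
    (∀ K₁ ∈ 𝒦, ∀ K₂ ∈ 𝒦, ∃ K₃ ∈ 𝒦, K₃ ⊆ K₁ ∧ K₃ ⊆ K₂) →
    ∀ U : Set X, IsOpen U → ⋂₀ 𝒦 ⊆ U → ∃ K ∈ 𝒦, K ⊆ U

def OmegaWellFiltered (X : Type*) [TopologicalSpace X] : Prop :=
  ∀ K : ℕ → Set X, (∀ n, IsCompact (K n) ∧ Saturated (K n)) →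
    (∀ m n : ℕ, ∃ k, K k ⊆ K m ∧ K k ⊆ K n) →
    ∀ U : Set X, IsOpen U → (⋂ n, K n) ⊆ U → ∃ n, K n ⊆ U

def SatWellFiltered (X : Type*) [TopologicalSpace X] : Prop :=
  ∀ 𝒜 : Set (Set X), 𝒜.Nonempty →
    (∀ A ∈ 𝒜, Saturated A) →
    (∀ A₁ ∈ 𝒜, ∀ A₂ ∈ 𝒜, ∃ A₃ ∈ 𝒜, RelCpt A₃ A₁ ∧ RelCpt A₃ A₂) →
    ∀ U : Set X, IsOpen U → ⋂₀ 𝒜 ⊆ U → ∃ A ∈ 𝒜, A ⊆ U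

def SatOmegaWellFiltered (X : Type*) [TopologicalSpace X] : Prop :=
  ∀ A : ℕ → Set X, (∀ n, Saturated (A n)) →
    (∀ m n : ℕ, ∃ k, RelCpt (A k) (A m) ∧ RelCpt (A k) (A n)) →
    ∀ U : Set X, IsOpen U → (⋂ n, A n) ⊆ U → ∃ n, A n ⊆ U

def OpenWellFiltered (X : Type*) [TopologicalSpace X] : Prop :=
  ∀ 𝒜 : Set (Set X), 𝒜.Nonempty →
    (∀ A ∈ 𝒜, IsOpen A) →
    (∀ A₁ ∈ 𝒜, ∀ A₂ ∈ 𝒜, ∃ A₃ ∈ 𝒜, RelCpt A₃ A₁ ∧ RelCpt A₃ A₂) →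
    ∀ U : Set X, IsOpen U → ⋂₀ 𝒜 ⊆ U → ∃ A ∈ 𝒜, A ⊆ U

def OpenOmegaWellFiltered (X : Type*) [TopologicalSpace X] : Prop :=
  ∀ A : ℕ → Set X, (∀ n, IsOpen (A n)) →
    (∀ m n : ℕ, ∃ k, RelCpt (A k) (A m) ∧ RelCpt (A k) (A n)) →
    ∀ U : Set X, IsOpen U → (⋂ n, A n) ⊆ U → ∃ n, A n ⊆ U

def CoreCompact (X : Type*) [TopologicalSpace X] : Prop :=
  ∀ (x : X) (U : Set X), IsOpen U → x ∈ U → ∃ V : Set X, IsOpen V ∧ x ∈ V ∧ RelCpt V U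

def Sober (X : Type*) [TopologicalSpace X] : Prop :=
  ∀ F : Set X, IsClosed F → F.Nonempty →
    (∀ F₁ F₂ : Set X, IsClosed F₁ → IsClosed F₂ → F ⊆ F₁ ∪ F₂ → F ⊆ F₁ ∨ F ⊆ F₂) →
    ∃! x : X, F = closure {x}

/-!
A `≪`-filtered family of open sets contains, below each of its members, sequences with
`W (n + 1) ≪ W n`, and the intersections of such sequences form a filtered family of saturated
sets with the same intersection as the family; so everything reduces to such sequences, which
also shows that these intersections are compact. If no `W n` lies in the open set `V ⊇ ⋂ n, W n`, Zorn's lemma gives a minimal closed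
set `A ⊆ Vᶜ` meeting every `W n`, and minimality forces every open set meeting `A` to contain
some `A ∩ W n`. A sequence `y n ∈ A ∩ W n` therefore converges to each of its own terms, so the
saturations of its tails are compact; they decrease to a subset of `⋂ n, W n ⊆ V`, yet none of
them lies in `V`, contradicting well-filteredness.
-/

open Filter Topology

section WellFiltered

variable {X : Type*} [TopologicalSpace X]

def saturation (S : Set X) : Set X := ⋂₀ {U : Set X | IsOpen U ∧ S ⊆ U}

lemma subset_saturation (S : Set X) : S ⊆ saturation S :=
  fun _ hx => mem_sInter.2 fun _ hU => hU.2 hx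

lemma saturation_subset {S U : Set X} (hU : IsOpen U) (hSU : S ⊆ U) : saturation S ⊆ U :=
  sInter_subset_of_mem ⟨hU, hSU⟩

lemma saturation_mono {S T : Set X} (hST : S ⊆ T) : saturation S ⊆ saturation T :=
  sInter_subset_sInter fun _ hU => ⟨hU.1, hST.trans hU.2⟩

lemma saturated_iff_saturation_subset {S : Set X} : Saturated S ↔ saturation S ⊆ S :=
  ⟨fun h => h.symm.subset, fun h => (subset_saturation S).antisymm h⟩

lemma saturated_saturation (S : Set X) : Saturated (saturation S) :=
  saturated_iff_saturation_subset.2 <| subset_sInter fun _ hU =>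
    saturation_subset hU.1 (saturation_subset hU.1 hU.2)

lemma saturated_iInter_of_isOpen {ι : Sort*} {U : ι → Set X} (hU : ∀ i, IsOpen (U i)) :
    Saturated (⋂ i, U i) :=
  saturated_iff_saturation_subset.2 <| subset_iInter fun i =>
    saturation_subset (hU i) (iInter_subset U i)

lemma IsCompact.saturation {S : Set X} (hS : IsCompact S) : IsCompact (saturation S) := by
  refine isCompact_of_finite_subcover fun U hUo hcov => ?_
  obtain ⟨t, ht⟩ := hS.elim_finite_subcover U hUo ((subset_saturation S).trans hcov)
  exact ⟨t, saturation_subset (isOpen_biUnion fun i _ => hUo i) ht⟩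

lemma RelCpt.elim_directed_cover {A B : Set X} (h : RelCpt A B) {ι : Type*} [Nonempty ι]
    (U : ι → Set X) (hUo : ∀ i, IsOpen (U i)) (hBU : B ⊆ ⋃ i, U i)
    (hdU : Directed (· ⊆ ·) U) : ∃ i, A ⊆ U i := by
  obtain ⟨𝒱, h𝒱U, h𝒱, hA𝒱⟩ := h.2 (range U) (forall_mem_range.2 hUo) (by rwa [sUnion_range])
  choose g hg using fun V : 𝒱 => h𝒱U V.2
  have := h𝒱.to_subtype
  obtain ⟨i, hi⟩ := hdU.finite_le g
  refine ⟨i, hA𝒱.trans <| sUnion_subset fun V hV => ?_⟩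
  simpa only [hg] using hi ⟨V, hV⟩

lemma RelCpt.elim_finite_subcover {A B : Set X} (h : RelCpt A B) {ι : Type*} (U : ι → Set X)
    (hUo : ∀ i, IsOpen (U i)) (hBU : B ⊆ ⋃ i, U i) : ∃ t : Finset ι, A ⊆ ⋃ i ∈ t, U i :=
  h.elim_directed_cover _ (fun _ => isOpen_biUnion fun i _ => hUo i)
    (iUnion_eq_iUnion_finset U ▸ hBU)
    (directed_of_isDirected_le fun _ _ h => biUnion_subset_biUnion_left h)

def closedMeeting {ι : Type*} (W : ι → Set X) : Set (Set X) :=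
  {F | IsClosed F ∧ ∀ i, (F ∩ W i).Nonempty}

lemma exists_minimal_closedMeeting {ι : Type*} {W : ι → Set X}
    (hW : ∀ i, ∃ j, RelCpt (W j) (W i)) {C : Set X} (hC : C ∈ closedMeeting W) :
    ∃ A ⊆ C, Minimal (· ∈ closedMeeting W) A := by
  refine zorn_superset_nonempty (closedMeeting W) (fun c hc hchain hcne => ⟨⋂₀ c,
    ⟨isClosed_sInter fun F hF => (hc hF).1, fun i => ?_⟩, fun _ => sInter_subset_of_mem⟩) C hC
  obtain ⟨j, hji⟩ := hW i
  -- otherwise the complements of the chain cover `W i`, so one of them already contains `W j`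
  by_contra hempty
  have := hcne.to_subtype
  have hcover : W i ⊆ ⋃ F : c, (F : Set X)ᶜ := fun x hx => by
    by_contra! hx'
    simp only [mem_iUnion, mem_compl_iff, not_exists, not_not] at hx'
    exact hempty ⟨x, mem_sInter.2 fun F hF => hx' ⟨F, hF⟩, hx⟩
  obtain ⟨F, hF⟩ := hji.elim_directed_cover _ (fun F => (hc F.2).1.isOpen_compl) hcover
    fun F₁ F₂ => (hchain.total F₁.2 F₂.2).elim
      (fun h => ⟨F₁, subset_rfl, compl_subset_compl.2 h⟩)
      (fun h => ⟨F₂, compl_subset_compl.2 h, subset_rfl⟩)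
  obtain ⟨x, hxF, hxW⟩ := (hc F.2).2 j
  exact hF hxW hxF

lemma Minimal.exists_inter_subset_of_isOpen {ι : Type*} {W : ι → Set X} {A : Set X}
    (hA : Minimal (· ∈ closedMeeting W) A) {O : Set X} (hO : IsOpen O) (hAO : (A ∩ O).Nonempty) :
    ∃ i, A ∩ W i ⊆ O := by
  by_contra! h
  have hAO' : A \ O ∈ closedMeeting W := by
    refine ⟨hA.prop.1.sdiff hO, fun i => ?_⟩
    obtain ⟨x, hx, hxO⟩ := not_subset.1 (h i)
    exact ⟨x, ⟨hx.1, hxO⟩, hx.2⟩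
  obtain ⟨x, hxA, hxO⟩ := hAO
  exact (hA.le_of_le hAO' sdiff_subset hxA).2 hxO

lemma Minimal.tendsto_of_mem {ι : Type*} [Preorder ι] {W : ι → Set X} (hW : Antitone W)
    {A : Set X} (hA : Minimal (· ∈ closedMeeting W) A) {y : ι → X} (hy : ∀ i, y i ∈ A ∩ W i)
    {a : X} (ha : a ∈ A) : Tendsto y atTop (𝓝 a) := by
  refine tendsto_nhds.2 fun O hO haO => ?_
  obtain ⟨i, hi⟩ := hA.exists_inter_subset_of_isOpen hO ⟨a, ha, haO⟩
  exact (eventually_ge_atTop i).mono fun j hij => hi ⟨(hy j).1, hW hij (hy j).2⟩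

lemma WellFiltered.exists_subset_of_antitone (hX : WellFiltered X) {K : ℕ → Set X}
    (hK : ∀ n, IsCompact (K n) ∧ Saturated (K n)) (hanti : Antitone K) {U : Set X}
    (hU : IsOpen U) (hKU : ⋂ n, K n ⊆ U) : ∃ n, K n ⊆ U := by
  obtain ⟨_, ⟨n, rfl⟩, hn⟩ := hX (range K) (range_nonempty K) (forall_mem_range.2 hK)
    (by
      rintro _ ⟨m, rfl⟩ _ ⟨n, rfl⟩
      exact ⟨K (max m n), mem_range_self _, hanti (le_max_left m n), hanti (le_max_right m n)⟩)
    U hU (by rwa [sInter_range])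
  exact ⟨n, hn⟩

theorem WellFiltered.exists_subset_of_relCpt_chain (hX : WellFiltered X) {W : ℕ → Set X}
    (hWo : ∀ n, IsOpen (W n)) (hW : ∀ n, RelCpt (W (n + 1)) (W n)) {V : Set X} (hV : IsOpen V)
    (hWV : ⋂ n, W n ⊆ V) : ∃ n, W n ⊆ V := by
  by_contra! hWV'
  have hanti : Antitone W := antitone_nat_of_succ_le fun n => (hW n).1
  have hVc : Vᶜ ∈ closedMeeting W := ⟨hV.isClosed_compl, fun n => by
    obtain ⟨x, hxW, hxV⟩ := not_subset.1 (hWV' n)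
    exact ⟨x, hxV, hxW⟩⟩
  obtain ⟨A, hAV, hA⟩ := exists_minimal_closedMeeting (fun n => ⟨n + 1, hW n⟩) hVc
  choose y hy using hA.prop.2
  have htail : ∀ m, IsCompact (y '' Ici m) := fun m => by
    have := ((hA.tendsto_of_mem hanti hy (hy m).1).comp
      (tendsto_add_atTop_nat m)).isCompact_insert_range
    rwa [Function.comp_def, range_add_eq_image_Ici,
      insert_eq_of_mem (mem_image_of_mem y self_mem_Ici)] at this
  have htailW : ∀ m, saturation (y '' Ici m) ⊆ W m := fun m =>
    saturation_subset (hWo m) (image_subset_iff.2 fun n hn => hanti hn (hy n).2)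
  obtain ⟨m, hm⟩ := hX.exists_subset_of_antitone
    (fun m => ⟨(htail m).saturation, saturated_saturation _⟩)
    (fun m n hmn => saturation_mono (image_mono (Ici_subset_Ici.2 hmn))) hV
    ((iInter_mono htailW).trans hWV)
  exact hAV (hy m).1 (hm (subset_saturation _ (mem_image_of_mem y self_mem_Ici)))

lemma WellFiltered.isCompact_iInter_of_relCpt_chain (hX : WellFiltered X) {W : ℕ → Set X}
    (hWo : ∀ n, IsOpen (W n)) (hW : ∀ n, RelCpt (W (n + 1)) (W n)) : IsCompact (⋂ n, W n) := by
  refine isCompact_of_finite_subcover fun U hUo hcov => ?_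
  obtain ⟨n, hn⟩ := hX.exists_subset_of_relCpt_chain hWo hW (isOpen_iUnion hUo) hcov
  obtain ⟨t, ht⟩ := (hW n).elim_finite_subcover U hUo hn
  exact ⟨t, (iInter_subset _ _).trans ht⟩

lemma exists_relCpt_chain_le {𝒜 : Set (Set X)}
    (h𝒜 : ∀ A₁ ∈ 𝒜, ∀ A₂ ∈ 𝒜, ∃ A₃ ∈ 𝒜, RelCpt A₃ A₁ ∧ RelCpt A₃ A₂) {σ : ℕ → Set X}
    (hσ : ∀ n, σ n ∈ 𝒜) :
    ∃ ρ : ℕ → Set X, (∀ n, ρ n ∈ 𝒜) ∧ (∀ n, RelCpt (ρ (n + 1)) (ρ n)) ∧ ∀ n, ρ n ⊆ σ n := by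
  choose! g hg𝒜 hg₁ hg₂ using h𝒜
  let ρ : ℕ → Set X := fun n => Nat.rec (g (σ 0) (σ 0)) (fun n r => g r (σ (n + 1))) n
  have hρ : ∀ n, ρ n ∈ 𝒜 := fun n => by
    induction n with
    | zero => exact hg𝒜 _ (hσ 0) _ (hσ 0)
    | succ n ih => exact hg𝒜 _ ih _ (hσ _)
  refine ⟨ρ, hρ, fun n => hg₁ _ (hρ n) _ (hσ _), fun n => ?_⟩
  cases n with
  | zero => exact (hg₁ _ (hσ 0) _ (hσ 0)).1
  | succ n => exact (hg₂ _ (hρ n) _ (hσ _)).1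

end WellFiltered

theorem stmt8_general (X : Type*) [TopologicalSpace X] (h : WellFiltered X) :
    OpenWellFiltered X := by
  intro 𝒜 h𝒜 hopen hfilt U hU h𝒜U
  let 𝒦 : Set (Set X) := {K | ∃ σ : ℕ → Set X,
    (∀ n, σ n ∈ 𝒜) ∧ (∀ n, RelCpt (σ (n + 1)) (σ n)) ∧ K = ⋂ n, σ n}
  have h𝒦 : ∀ K ∈ 𝒦, IsCompact K ∧ Saturated K := by
    rintro _ ⟨σ, hσ𝒜, hσ, rfl⟩
    exact ⟨h.isCompact_iInter_of_relCpt_chain (fun n => hopen _ (hσ𝒜 n)) hσ,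
      saturated_iInter_of_isOpen fun n => hopen _ (hσ𝒜 n)⟩
  have h𝒦dir : ∀ K₁ ∈ 𝒦, ∀ K₂ ∈ 𝒦, ∃ K₃ ∈ 𝒦, K₃ ⊆ K₁ ∧ K₃ ⊆ K₂ := by
    rintro _ ⟨σ, hσ𝒜, -, rfl⟩ _ ⟨τ, hτ𝒜, -, rfl⟩
    choose μ hμ𝒜 hμσ hμτ using fun n => hfilt _ (hσ𝒜 n) _ (hτ𝒜 n)
    obtain ⟨ρ, hρ𝒜, hρ, hρμ⟩ := exists_relCpt_chain_le hfilt hμ𝒜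
    exact ⟨_, ⟨ρ, hρ𝒜, hρ, rfl⟩, iInter_mono fun n => (hρμ n).trans (hμσ n).1,
      iInter_mono fun n => (hρμ n).trans (hμτ n).1⟩
  have h𝒦U : ⋂₀ 𝒦 ⊆ U := fun x hx => h𝒜U <| mem_sInter.2 fun A hA => by
    obtain ⟨σ, hσ𝒜, hσ, hσA⟩ := exists_relCpt_chain_le hfilt fun _ => hA
    exact hσA 0 (mem_iInter.1 (mem_sInter.1 hx _ ⟨σ, hσ𝒜, hσ, rfl⟩) 0)
  obtain ⟨A, hA⟩ := h𝒜
  obtain ⟨σ₀, hσ₀𝒜, hσ₀, -⟩ := exists_relCpt_chain_le hfilt fun _ => hA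
  obtain ⟨_, ⟨σ, hσ𝒜, hσ, rfl⟩, hσU⟩ := h 𝒦 ⟨_, σ₀, hσ₀𝒜, hσ₀, rfl⟩ h𝒦 h𝒦dir U hU h𝒦U
  obtain ⟨n, hn⟩ := h.exists_subset_of_relCpt_chain (fun n => hopen _ (hσ𝒜 n)) hσ hU hσU
  exact ⟨σ n, hσ𝒜 n, hn⟩

/-- Every well-filtered space is open well-filtered. -/
theorem stmt8 (X : Type*) [TopologicalSpace X] [T0Space X] (h : WellFiltered X) :
    OpenWellFiltered X :=
  stmt8_general X h
end

section
/- There exists an open well-filtered T0 space that is not ω-well-filtered (hence not well-filtered and not a d-space): the Scott space of P = J ∪ ℕ, where J is Johnstone's dcpo and each k ∈ ℕ lies below (k, ω), is open well-filtered but the directed set ℕ ⊆ P has no supremum, so the space is not ω-well-filtered. -/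
open Set

abbrev JJ : Type := ℕ × WithTop ℕ
abbrev PP : Type := JJ ⊕ ℕ

/-- The order on `J = ℕ × (ℕ ∪ {ω})` (Johnstone's dcpo). -/
def jle (a b : JJ) : Prop :=
  (a.1 = b.1 ∧ a.2 ≤ b.2) ∨ (b.2 = ⊤ ∧ a.2 ≤ (b.1 : WithTop ℕ))

/-- The order on `P = J ∪ ℕ`. -/
def ple : PP → PP → Prop
  | Sum.inl a, Sum.inl b => jle a b
  | Sum.inr m, Sum.inr n => m ≤ n
  | Sum.inr m, Sum.inl b => b = (m, (⊤ : WithTop ℕ))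
  | Sum.inl _, Sum.inr _ => False

def dirP (D : Set PP) : Prop :=
  D.Nonempty ∧ ∀ a ∈ D, ∀ b ∈ D, ∃ c ∈ D, ple a c ∧ ple b c

def isLubP (D : Set PP) (s : PP) : Prop :=
  (∀ d ∈ D, ple d s) ∧ ∀ b : PP, (∀ d ∈ D, ple d b) → ple s b

def scottOpenP (U : Set PP) : Prop :=
  (∀ x ∈ U, ∀ y : PP, ple x y → y ∈ U) ∧
  ∀ D : Set PP, dirP D → ∀ s : PP, isLubP D s → s ∈ U → (D ∩ U).Nonempty

/-- The Scott topology on `P`. -/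
def scottTopP : TopologicalSpace PP where
  IsOpen := scottOpenP
  isOpen_univ := by
    refine ⟨fun _ _ _ _ => trivial, fun D hD _ _ _ => hD.1.imp fun d hd => ⟨hd, trivial⟩⟩
  isOpen_inter := by
    rintro U V ⟨hUu, hUd⟩ ⟨hVu, hVd⟩
    refine ⟨fun x hx y hxy => ⟨hUu x hx.1 y hxy, hVu x hx.2 y hxy⟩, ?_⟩
    intro D hD s hs hsUV
    obtain ⟨d₁, hd₁D, hd₁U⟩ := hUd D hD s hs hsUV.1
    obtain ⟨d₂, hd₂D, hd₂V⟩ := hVd D hD s hs hsUV.2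
    obtain ⟨c, hcD, hc₁, hc₂⟩ := hD.2 d₁ hd₁D d₂ hd₂D
    exact ⟨c, hcD, hUu d₁ hd₁U c hc₁, hVu d₂ hd₂V c hc₂⟩
  isOpen_sUnion := by
    intro S hS
    constructor
    · rintro x ⟨t, htS, hxt⟩ y hxy
      exact ⟨t, htS, (hS t htS).1 x hxt y hxy⟩
    · rintro D hD s hs ⟨t, htS, hst⟩
      obtain ⟨d, hdD, hdt⟩ := (hS t htS).2 D hD s hs hst
      exact ⟨d, hdD, t, htS, hdt⟩

/-!
The only directed suprema in `P` not attained in the directed set are the tops `(m, ω)` of the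
columns `{(m, j) | j ∈ ℕ}`, so a set is Scott open iff it is an upper set that meets column `m`
whenever it contains `(m, ω)`. Hence the complement of every principal lower set is open, the
specialization order is the order of `P`, and the space is T0. The saturations of the points
`k ∈ ℕ` then form a decreasing sequence of compact saturated sets whose intersection is the set
of upper bounds of `ℕ`, which is empty.

A nonempty open set contains `(m, ω)` for all large `m`, hence some `(m, a m)` in each such
column. The open sets `{(m, i) | m > t → a m < i} ∪ ℕ` increase with `t` and cover `P`, but none
contains all these points, so no nonempty open set is relatively compact in anything, and open
well-filteredness holds trivially.
-/

lemma jle_refl (a : JJ) : jle a a := Or.inl ⟨rfl, le_rfl⟩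

lemma jle_trans {a b c : JJ} (hab : jle a b) (hbc : jle b c) : jle a c := by
  obtain ⟨m, i⟩ := a; obtain ⟨m', i'⟩ := b; obtain ⟨m'', i''⟩ := c
  rcases hab with ⟨rfl, h⟩ | ⟨rfl, h⟩ <;> rcases hbc with ⟨rfl, h'⟩ | ⟨rfl, h'⟩
  · exact Or.inl ⟨rfl, h.trans h'⟩
  · exact Or.inr ⟨rfl, h.trans h'⟩
  · exact Or.inr ⟨top_le_iff.mp h', h⟩
  · exact absurd h' (WithTop.not_top_le_coe _)

lemma jle_antisymm {a b : JJ} (hab : jle a b) (hba : jle b a) : a = b := by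
  obtain ⟨m, i⟩ := a; obtain ⟨m', i'⟩ := b
  rcases hab with ⟨rfl, h⟩ | ⟨rfl, h⟩ <;> rcases hba with ⟨-, h'⟩ | ⟨rfl, h'⟩
  · exact Prod.ext rfl (le_antisymm h h')
  all_goals simp_all

-- `ple` is not transitive: it lacks `k ≤ (l, ω)` for `k < l`. This is its transitive closure.
def pleClosure : PP → PP → Prop
  | Sum.inl a, Sum.inl b => jle a b
  | Sum.inr m, Sum.inr n => m ≤ n
  | Sum.inr m, Sum.inl b => b.2 = ⊤ ∧ m ≤ b.1
  | Sum.inl _, Sum.inr _ => False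

lemma pleClosure_of_ple {x y : PP} (h : ple x y) : pleClosure x y := by
  rcases x with a | k <;> rcases y with b | l
  · exact h
  · exact h
  · exact (h : b = _) ▸ ⟨rfl, le_rfl⟩
  · exact h

lemma pleClosure_refl (x : PP) : pleClosure x x := by
  rcases x with a | k
  · exact jle_refl a
  · exact le_rfl

lemma pleClosure_trans {x y z : PP} (hxy : pleClosure x y) (hyz : pleClosure y z) :
    pleClosure x z := by
  rcases x with a | k <;> rcases y with ⟨m, i⟩ | l <;> rcases z with ⟨m', i'⟩ | n <;>
    simp only [pleClosure] at hxy hyz ⊢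
  · exact jle_trans hxy hyz
  · obtain ⟨rfl, hkm⟩ := hxy
    rcases hyz with ⟨rfl, h⟩ | ⟨rfl, h⟩
    · exact ⟨top_le_iff.mp h, hkm⟩
    · exact absurd h (WithTop.not_top_le_coe _)
  · exact ⟨hyz.1, hxy.trans hyz.2⟩
  · exact hxy.trans hyz

lemma pleClosure_antisymm {x y : PP} (hxy : pleClosure x y) (hyx : pleClosure y x) : x = y := by
  rcases x with a | k <;> rcases y with b | l
  · exact congrArg _ (jle_antisymm hxy hyx)
  · exact hxy.elim
  · exact hyx.elim
  · exact congrArg _ (le_antisymm hxy hyx)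

lemma ple_antisymm {x y : PP} (hxy : ple x y) (hyx : ple y x) : x = y :=
  pleClosure_antisymm (pleClosure_of_ple hxy) (pleClosure_of_ple hyx)

lemma isLubP_eq_of_greatest {D : Set PP} {s g : PP} (hs : isLubP D s) (hg : g ∈ D)
    (hgD : ∀ d ∈ D, ple d g) : s = g :=
  ple_antisymm (hs.2 g hgD) (hs.1 g hg)

lemma isLubP_mem_of_subset_image {D : Set PP} {s : PP} {e : ℕ → PP}
    (he : ∀ i j, i ≤ j → ple (e i) (e j)) {n : ℕ} (hD : D ⊆ e '' Iic n) (hne : D.Nonempty)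
    (hs : isLubP D s) : s ∈ D := by
  set S := {k | k ≤ n ∧ e k ∈ D}
  have hSne : S.Nonempty := by
    obtain ⟨d, hd⟩ := hne
    obtain ⟨k, hk, rfl⟩ := hD hd
    exact ⟨k, hk, hd⟩
  have hSbdd : BddAbove S := ⟨n, fun k hk => hk.1⟩
  have hgreatest : ∀ d ∈ D, ple d (e (sSup S)) := by
    intro d hd
    obtain ⟨k, hk, rfl⟩ := hD hd
    exact he _ _ (le_csSup hSbdd ⟨hk, hd⟩)
  have hmem : e (sSup S) ∈ D := (Nat.sSup_mem hSne hSbdd).2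
  exact isLubP_eq_of_greatest hs hmem hgreatest ▸ hmem

lemma isLubP_inr_mem {D : Set PP} {n : ℕ} (hD : dirP D) (hs : isLubP D (Sum.inr n)) :
    Sum.inr n ∈ D := by
  refine isLubP_mem_of_subset_image (e := Sum.inr) (n := n) (fun _ _ h => h) (fun d hd => ?_)
    hD.1 hs
  rcases d with a | k
  · exact (hs.1 _ hd).elim
  · exact ⟨k, hs.1 _ hd, rfl⟩

lemma isLubP_inl_coe_mem {D : Set PP} {m n : ℕ} (hD : dirP D)
    (hs : isLubP D (Sum.inl (m, (n : WithTop ℕ)))) : Sum.inl (m, (n : WithTop ℕ)) ∈ D := by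
  refine isLubP_mem_of_subset_image (e := fun j => Sum.inl (m, (j : WithTop ℕ))) (n := n)
    (fun _ _ h => Or.inl ⟨rfl, WithTop.coe_le_coe.mpr h⟩) (fun d hd => ?_) hD.1 hs
  rcases d with ⟨m', i⟩ | k
  · rcases hs.1 _ hd with ⟨rfl, h⟩ | ⟨h, -⟩
    · lift i to ℕ using ne_top_of_le_ne_top WithTop.coe_ne_top h
      exact ⟨i, WithTop.coe_le_coe.mp h, rfl⟩
    · simp at h
  · have h : (m, (n : WithTop ℕ)) = (k, ⊤) := hs.1 _ hd
    simp at h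

lemma isLubP_top_mem_or_cofinal {D : Set PP} {m : ℕ} (hD : dirP D)
    (hs : isLubP D (Sum.inl (m, ⊤))) :
    Sum.inl (m, ⊤) ∈ D ∨ ∀ j : ℕ, ∃ d ∈ D, ple (Sum.inl (m, (j : WithTop ℕ))) d := by
  have hinr_eq : ∀ k, Sum.inr k ∈ D → k = m := fun k hk =>
    ((Prod.mk.inj (hs.1 _ hk : (m, ⊤) = (k, ⊤))).1).symm
  by_contra! ⟨htop, j, hj⟩
  by_cases hinr : Sum.inr m ∈ D
  · have hgreatest : ∀ d ∈ D, ple d (Sum.inr m) := by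
      intro d hd
      obtain ⟨c, hc, hmc, hdc⟩ := hD.2 _ hinr d hd
      rcases c with c | k
      · exact absurd ((hmc : c = _) ▸ hc) htop
      · exact hinr_eq k hc ▸ hdc
    exact absurd (isLubP_eq_of_greatest hs hinr hgreatest) Sum.inl_ne_inr
  · obtain ⟨M, hjM, hmM⟩ : ∃ M, j < M ∧ m < M := ⟨max m j + 1, by omega, by omega⟩
    have hbound : ∀ d ∈ D, ple d (Sum.inl (M, ⊤)) := by
      rintro (⟨m', i⟩ | k) hd
      · refine Or.inr ⟨rfl, ?_⟩
        rcases hs.1 _ hd with ⟨rfl, -⟩ | ⟨-, h⟩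
        · have hij : i < j := not_le.mp fun h => hj _ hd (Or.inl ⟨rfl, h⟩)
          exact hij.le.trans (WithTop.coe_le_coe.mpr hjM.le)
        · exact h.trans (WithTop.coe_le_coe.mpr hmM.le)
      · exact absurd (hinr_eq k hd ▸ hd) hinr
    rcases hs.2 _ hbound with ⟨h, -⟩ | ⟨-, h⟩
    · exact hmM.ne h
    · simp at h

def column (m : ℕ) : Set PP := range fun j : ℕ => Sum.inl (m, (j : WithTop ℕ))

lemma dirP_column (m : ℕ) : dirP (column m) := by
  refine ⟨⟨_, 0, rfl⟩, ?_⟩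
  rintro _ ⟨i, rfl⟩ _ ⟨j, rfl⟩
  exact ⟨_, ⟨max i j, rfl⟩, Or.inl ⟨rfl, by simp⟩, Or.inl ⟨rfl, by simp⟩⟩

lemma isLubP_column (m : ℕ) : isLubP (column m) (Sum.inl (m, ⊤)) := by
  refine ⟨fun _ ⟨j, hj⟩ => hj ▸ Or.inl ⟨rfl, le_top⟩, fun b hb => ?_⟩
  have hcol : ∀ j : ℕ, ple (Sum.inl (m, (j : WithTop ℕ))) b := fun j => hb _ ⟨j, rfl⟩
  rcases b with ⟨m', i⟩ | k
  · induction i using WithTop.recTopCoe with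
    | top =>
      rcases hcol (m' + 1) with ⟨h, -⟩ | ⟨-, h⟩
      · exact Or.inl ⟨h, le_rfl⟩
      · exact absurd (WithTop.coe_le_coe.mp h) (Nat.not_succ_le_self _)
    | coe n =>
      rcases hcol (n + 1) with ⟨-, h⟩ | ⟨h, -⟩
      · exact absurd (WithTop.coe_le_coe.mp h) (Nat.not_succ_le_self _)
      · simp at h
  · exact (hcol 0).elim

theorem scottOpenP_iff {U : Set PP} :
    scottOpenP U ↔ (∀ x ∈ U, ∀ y, ple x y → y ∈ U) ∧
      ∀ m : ℕ, Sum.inl (m, ⊤) ∈ U → ∃ j : ℕ, Sum.inl (m, (j : WithTop ℕ)) ∈ U := by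
  refine ⟨fun hU => ⟨hU.1, fun m hm => ?_⟩, fun ⟨hup, hcol⟩ => ⟨hup, fun D hD s hs hsU => ?_⟩⟩
  · obtain ⟨_, ⟨j, rfl⟩, hj⟩ := hU.2 _ (dirP_column m) _ (isLubP_column m) hm
    exact ⟨j, hj⟩
  have hsD : s ∈ D ∨ ∃ m : ℕ, s = Sum.inl (m, ⊤) ∧
      ∀ j : ℕ, ∃ d ∈ D, ple (Sum.inl (m, (j : WithTop ℕ))) d := by
    rcases s with ⟨m, i⟩ | n
    · induction i using WithTop.recTopCoe with
      | top => exact (isLubP_top_mem_or_cofinal hD hs).imp_right fun h => ⟨m, rfl, h⟩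
      | coe n => exact Or.inl (isLubP_inl_coe_mem hD hs)
    · exact Or.inl (isLubP_inr_mem hD hs)
  rcases hsD with hsD | ⟨m, rfl, hcof⟩
  · exact ⟨s, hsD, hsU⟩
  · obtain ⟨j, hj⟩ := hcol m hsU
    obtain ⟨d, hd, hjd⟩ := hcof j
    exact ⟨d, hd, hup _ hj d hjd⟩

lemma openWellFiltered_of_relCpt_eq_empty {X : Type*} [TopologicalSpace X]
    (h : ∀ A B : Set X, IsOpen A → RelCpt A B → A = ∅) : OpenWellFiltered X := by
  rintro 𝒜 ⟨A, hA⟩ hopen hfilt U - -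
  obtain ⟨A', hA', hrel, -⟩ := hfilt A hA A hA
  exact ⟨A', hA', (h A' A (hopen A' hA') hrel).symm ▸ empty_subset U⟩

lemma RelCpt.exists_subset_of_monotone {X : Type*} [TopologicalSpace X] {A B : Set X}
    (h : RelCpt A B) {V : ℕ → Set X} (hVo : ∀ t, IsOpen (V t)) (hV : Monotone V)
    (hB : B ⊆ ⋃ t, V t) : ∃ t, A ⊆ V t := by
  obtain ⟨𝒱, h𝒱, hfin, hA⟩ := h.2 (range V) (forall_mem_range.2 hVo) (by rwa [sUnion_range])
  have := hfin.to_subtype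
  choose f hf using fun W : 𝒱 => h𝒱 W.2
  obtain ⟨M, hM⟩ := (finite_range f).bddAbove
  refine ⟨M, hA.trans (sUnion_subset fun W hW => ?_)⟩
  exact (hf ⟨W, hW⟩).ge.trans (hV (hM ⟨⟨W, hW⟩, rfl⟩))

lemma OmegaWellFiltered.exists_forall_specializes {X : Type*} [TopologicalSpace X]
    (hX : OmegaWellFiltered X) (x : ℕ → X) (hx : ∀ m n, m ≤ n → x n ⤳ x m) :
    ∃ y, ∀ n, y ⤳ x n := by
  have hK : ∀ n, IsCompact (nhdsKer {x n}) ∧ Saturated (nhdsKer {x n}) := fun n =>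
    ⟨isCompact_singleton.nhdsKer, by rw [Saturated, ← nhdsKer_def, nhdsKer_nhdsKer]⟩
  have hmono : ∀ m n, m ≤ n → nhdsKer {x n} ⊆ nhdsKer {x m} := fun m n hmn y hy =>
    mem_nhdsKer_singleton.2 ((mem_nhdsKer_singleton.1 hy).trans (hx m n hmn))
  have hfilt : ∀ m n, ∃ k, nhdsKer {x k} ⊆ nhdsKer {x m} ∧ nhdsKer {x k} ⊆ nhdsKer {x n} :=
    fun m n => ⟨max m n, hmono _ _ (le_max_left m n), hmono _ _ (le_max_right m n)⟩
  by_contra! h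
  obtain ⟨n, hn⟩ := hX _ hK hfilt ∅ isOpen_empty fun y hy => by
    obtain ⟨n, hn⟩ := h y
    exact hn (mem_nhdsKer_singleton.1 (mem_iInter.1 hy n))
  exact hn (mem_nhdsKer_singleton.2 specializes_rfl)

attribute [local instance] scottTopP

lemma specializes_of_ple {x y : PP} (h : ple x y) : y ⤳ x :=
  specializes_iff_forall_open.2 fun _ hU hx => hU.1 _ hx _ h

lemma isOpen_not_pleClosure (y : PP) : IsOpen {x | ¬ pleClosure x y} := by
  refine scottOpenP_iff.2
    ⟨fun x hx z hxz hzy => hx (pleClosure_trans (pleClosure_of_ple hxz) hzy), fun m hm => ?_⟩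
  by_contra! hcol
  rcases y with b | k
  · exact hm ((isLubP_column m).2 (Sum.inl b) fun _ ⟨j, hj⟩ => hj ▸ not_not.1 (hcol j))
  · exact hcol 0 id

lemma pleClosure_of_specializes {x y : PP} (h : y ⤳ x) : pleClosure x y := by
  by_contra hxy
  exact specializes_iff_forall_open.1 h _ (isOpen_not_pleClosure y) hxy (pleClosure_refl y)

lemma t0Space_scottTopP : T0Space PP :=
  (t0Space_iff_inseparable PP).2 fun _ _ h =>
    pleClosure_antisymm (pleClosure_of_specializes h.specializes')
      (pleClosure_of_specializes h.specializes)

lemma exists_not_pleClosure_inr (y : PP) : ∃ n, ¬ pleClosure (Sum.inr n) y := by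
  rcases y with ⟨m, i⟩ | k
  · exact ⟨m + 1, fun h => Nat.not_succ_le_self m h.2⟩
  · exact ⟨k + 1, Nat.not_succ_le_self k⟩

lemma exists_inl_coe_mem {A : Set PP} (hA : IsOpen A) (hne : A.Nonempty) :
    ∃ m j : ℕ, Sum.inl (m, (j : WithTop ℕ)) ∈ A := by
  have hcol := (scottOpenP_iff.1 hA).2
  obtain ⟨⟨m, i⟩ | k, hx⟩ := hne
  · induction i using WithTop.recTopCoe with
    | top => exact ⟨m, hcol m hx⟩
    | coe j => exact ⟨m, j, hx⟩
  · exact ⟨k, hcol k (hA.1 _ hx _ rfl)⟩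

lemma exists_column_mem {A : Set PP} (hA : IsOpen A) (hne : A.Nonempty) :
    ∃ N, ∀ m, N ≤ m → ∃ j : ℕ, Sum.inl (m, (j : WithTop ℕ)) ∈ A := by
  obtain ⟨_, N, hN⟩ := exists_inl_coe_mem hA hne
  exact ⟨N, fun m hm =>
    (scottOpenP_iff.1 hA).2 m (hA.1 _ hN _ (Or.inr ⟨rfl, WithTop.coe_le_coe.2 hm⟩))⟩

def columnCover (a : ℕ → ℕ) (t : ℕ) : Set PP :=
  {x | ∀ m i, x = Sum.inl (m, i) → t < m → (a m : WithTop ℕ) < i}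

lemma isOpen_columnCover (a : ℕ → ℕ) (t : ℕ) : IsOpen (columnCover a t) := by
  refine scottOpenP_iff.2 ⟨?_, fun m _ => ⟨a m + 1, ?_⟩⟩
  · rintro (⟨m', i'⟩ | k) hx y hxy m i rfl htm
    · rcases hxy with ⟨rfl, h⟩ | ⟨rfl, -⟩
      · exact (hx _ _ rfl htm).trans_le h
      · exact WithTop.coe_lt_top _
    · obtain ⟨-, rfl⟩ := Prod.mk.inj (hxy : (m, i) = (k, ⊤))
      exact WithTop.coe_lt_top _
  · intro m' i h _
    obtain ⟨rfl, rfl⟩ := Prod.mk.inj (Sum.inl_injective h)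
    exact WithTop.coe_lt_coe.2 (Nat.lt_succ_self _)

lemma columnCover_mono (a : ℕ → ℕ) : Monotone (columnCover a) :=
  fun _ _ hst _ hx m i h htm => hx m i h (hst.trans_lt htm)

lemma iUnion_columnCover (a : ℕ → ℕ) : ⋃ t, columnCover a t = univ := by
  refine eq_univ_of_forall fun x => mem_iUnion.2 ?_
  rcases x with ⟨m, i⟩ | k
  · refine ⟨m, fun m' i' h hm => ?_⟩
    obtain ⟨rfl, -⟩ := Prod.mk.inj (Sum.inl_injective h)
    exact absurd hm (lt_irrefl m)
  · exact ⟨0, fun _ _ h => absurd h Sum.inr_ne_inl⟩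

lemma eq_empty_of_relCpt {A B : Set PP} (hA : IsOpen A) (h : RelCpt A B) : A = ∅ := by
  by_contra hne
  obtain ⟨N, hN⟩ := exists_column_mem hA (nonempty_iff_ne_empty.2 hne)
  choose! a ha using hN
  obtain ⟨t, ht⟩ := h.exists_subset_of_monotone (isOpen_columnCover a) (columnCover_mono a)
    (by rw [iUnion_columnCover]; exact subset_univ B)
  have hm : N ≤ max (t + 1) N := le_max_right _ _
  exact lt_irrefl _ (ht (ha _ hm) _ _ rfl (by omega))

/-- The Scott space of `P` is a T0 open well-filtered space which is not ω-well-filtered;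
in particular the directed set `ℕ ⊆ P` has no supremum. -/
theorem stmt18 :
    @T0Space PP scottTopP ∧ @OpenWellFiltered PP scottTopP ∧
    (¬ ∃ s : PP, isLubP (Set.range (Sum.inr : ℕ → PP)) s) ∧
    ¬ @OmegaWellFiltered PP scottTopP := by
  refine ⟨t0Space_scottTopP,
    openWellFiltered_of_relCpt_eq_empty fun _ _ hA h => eq_empty_of_relCpt hA h, ?_, ?_⟩
  · rintro ⟨s, hs, -⟩
    obtain ⟨n, hn⟩ := exists_not_pleClosure_inr s
    exact hn (pleClosure_of_ple (hs _ ⟨n, rfl⟩))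
  · intro hω
    obtain ⟨y, hy⟩ := hω.exists_forall_specializes Sum.inr fun _ _ h => specializes_of_ple h
    obtain ⟨n, hn⟩ := exists_not_pleClosure_inr y
    exact hn (pleClosure_of_specializes (hy n))
end
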